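/- arXiv:1711.07734 — 4 statements merged into one kernel-verified Lean document; each statement's English description precedes it below -/
import Mathlib

section
/- Let k₁ ≥ k₂ ≥ 3 be integers and let n₁, n₂ be nonnegative integers with n₁ ≥ k₁. Then [n₁, k₁+k₂, k₂] + [n₂, k₂, k₂] ≤ [n₁+n₂, k₁+k₂, k₂]. -/
/-- The quantity `[n, m, ℓ]` of the paper: writing `n = (m-1) + t(ℓ-1) + r` with
`t ≥ 0`, `0 ≤ r < ℓ-1`, it equals `C(m-1,2) + t·C(ℓ-1,2) + C(r,2)`;
if `n ≤ m-1` it equals `C(n,2)`. -/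
def bracket (n m ℓ : ℕ) : ℕ :=
  if n ≤ m - 1 then n.choose 2
  else (m - 1).choose 2 + ((n - (m - 1)) / (ℓ - 1)) * (ℓ - 1).choose 2
    + ((n - (m - 1)) % (ℓ - 1)).choose 2

/-!
Past an initial clique on `m - 1` vertices, `[n, m, ℓ]` counts the edges of a disjoint union of
cliques of size `ℓ - 1` (the last one possibly smaller) on the remaining vertices. This count,
`blockChoose (ℓ - 1)`, is superadditive, and `[n, ℓ, ℓ]` is itself such a count. When
`n₁ > k₁ + k₂ - 1` superadditivity is the whole argument. When `n₁ ≤ k₁ + k₂ - 1 < n₁ + n₂`,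
completing the initial clique with `d` vertices taken from the blocks gains at least `d n₁` edges
and loses at most `d (k₂ - 2) ≤ d n₁`.
-/

open Nat

theorem choose_two_add (a b : ℕ) : (a + b).choose 2 = a.choose 2 + a * b + b.choose 2 := by
  induction b with
  | zero => simp
  | succ b ih =>
    rw [← add_assoc, choose_succ_succ', choose_one_right, ih, choose_succ_succ', choose_one_right]
    ring

theorem choose_two_add_choose_two_le (a b : ℕ) : a.choose 2 + b.choose 2 ≤ (a + b).choose 2 := by
  rw [choose_two_add]
  omega

theorem choose_two_add_choose_two_le_of_add_eq {a b c d : ℕ} (ha : a ≤ c) (hb : b ≤ c)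
    (h : a + b = c + d) : a.choose 2 + b.choose 2 ≤ c.choose 2 + d.choose 2 := by
  obtain ⟨y, rfl⟩ : ∃ y, b = d + y := ⟨b - d, by omega⟩
  obtain rfl : c = a + y := by omega
  have : d * y ≤ a * y := Nat.mul_le_mul_right y (by omega)
  rw [choose_two_add, choose_two_add]
  omega

def blockChoose (L x : ℕ) : ℕ := x / L * L.choose 2 + (x % L).choose 2

section blockChoose

variable {L : ℕ}

theorem blockChoose_mul_add {q r : ℕ} (hr : r < L) :
    blockChoose L (q * L + r) = q * L.choose 2 + r.choose 2 := by
  have hL : 0 < L := by omega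
  rw [blockChoose, mul_comm q L, Nat.mul_add_div hL, Nat.mul_add_mod,
    Nat.div_eq_of_lt hr, Nat.mod_eq_of_lt hr, add_zero]

theorem blockChoose_of_le {n : ℕ} (h : n ≤ L) : blockChoose L n = n.choose 2 := by
  rcases h.lt_or_eq with h | rfl
  · simpa using blockChoose_mul_add (q := 0) h
  · rcases n.eq_zero_or_pos with rfl | hn
    · rfl
    · simp [blockChoose, Nat.div_self hn]

theorem blockChoose_add_self (x : ℕ) : blockChoose L (x + L) = blockChoose L x + L.choose 2 := by
  rcases L.eq_zero_or_pos with rfl | hL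
  · simp
  · rw [blockChoose, blockChoose, Nat.add_div_right _ hL, Nat.add_mod_right, add_one_mul]
    ring

theorem blockChoose_succ (hL : 0 < L) (x : ℕ) :
    blockChoose L (x + 1) = blockChoose L x + x % L := by
  obtain ⟨q, r, hr, rfl⟩ : ∃ q r, r < L ∧ x = q * L + r :=
    ⟨x / L, x % L, Nat.mod_lt _ hL, (Nat.div_add_mod' x L).symm⟩
  rw [blockChoose_mul_add hr, Nat.mul_add_mod_self_right, Nat.mod_eq_of_lt hr]
  rcases (Nat.succ_le_of_lt hr).lt_or_eq with h | h
  · rw [add_assoc, blockChoose_mul_add h, choose_two_add r 1]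
    simp only [mul_one, choose_succ_self, add_zero, add_assoc]
  · obtain rfl : L = r + 1 := h.symm
    rw [show q * (r + 1) + r + 1 = (q + 1) * (r + 1) + 0 by ring, blockChoose_mul_add hL,
      choose_two_add r 1]
    simp only [mul_one, choose_succ_self, add_zero, choose_zero_succ, add_one_mul]
    ring

theorem blockChoose_add_le (hL : 0 < L) (x d : ℕ) :
    blockChoose L (x + d) ≤ blockChoose L x + d * (L - 1) := by
  induction d with
  | zero => simp
  | succ d ih =>
    have : (x + d) % L ≤ L - 1 := Nat.le_sub_one_of_lt (Nat.mod_lt _ hL)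
    rw [← add_assoc, blockChoose_succ hL, add_one_mul]
    omega

theorem blockChoose_add_blockChoose_le (hL : 0 < L) (a b : ℕ) :
    blockChoose L a + blockChoose L b ≤ blockChoose L (a + b) := by
  obtain ⟨q₁, r₁, hr₁, rfl⟩ : ∃ q r, r < L ∧ a = q * L + r :=
    ⟨a / L, a % L, Nat.mod_lt _ hL, (Nat.div_add_mod' a L).symm⟩
  obtain ⟨q₂, r₂, hr₂, rfl⟩ : ∃ q r, r < L ∧ b = q * L + r :=
    ⟨b / L, b % L, Nat.mod_lt _ hL, (Nat.div_add_mod' b L).symm⟩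
  rw [blockChoose_mul_add hr₁, blockChoose_mul_add hr₂]
  rcases lt_or_ge (r₁ + r₂) L with h | h
  · rw [show q₁ * L + r₁ + (q₂ * L + r₂) = (q₁ + q₂) * L + (r₁ + r₂) by ring,
      blockChoose_mul_add h, add_mul]
    have := choose_two_add_choose_two_le r₁ r₂
    omega
  · have hr : r₁ + r₂ - L < L := by omega
    rw [show q₁ * L + r₁ + (q₂ * L + r₂) = (q₁ + q₂ + 1) * L + (r₁ + r₂ - L) by
        rw [add_mul, add_mul, one_mul]; omega,
      blockChoose_mul_add hr, add_mul, add_mul, one_mul]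
    have := choose_two_add_choose_two_le_of_add_eq hr₁.le hr₂.le (by omega : r₁ + r₂ = L + (r₁ + r₂ - L))
    omega

theorem choose_two_add_blockChoose_le (hL : 0 < L) {n y d : ℕ} (hn : L - 1 ≤ n) :
    n.choose 2 + blockChoose L (y + d) ≤ (n + d).choose 2 + blockChoose L y := by
  have hblock := blockChoose_add_le hL y d
  have : d * (L - 1) ≤ n * d := by rw [mul_comm]; exact Nat.mul_le_mul_right d hn
  rw [choose_two_add]
  omega

end blockChoose

theorem bracket_of_le {n m ℓ : ℕ} (h : n ≤ m - 1) : bracket n m ℓ = n.choose 2 := if_pos h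

theorem bracket_of_lt {n m ℓ : ℕ} (h : m - 1 < n) :
    bracket n m ℓ = (m - 1).choose 2 + blockChoose (ℓ - 1) (n - (m - 1)) := by
  rw [bracket, if_neg h.not_ge, blockChoose, add_assoc]

theorem bracket_self (n ℓ : ℕ) : bracket n ℓ ℓ = blockChoose (ℓ - 1) n := by
  rcases le_or_gt n (ℓ - 1) with h | h
  · rw [bracket_of_le h, blockChoose_of_le h]
  · rw [bracket_of_lt h, add_comm, ← blockChoose_add_self, Nat.sub_add_cancel h.le]

/-- If `k₁ ≥ k₂ ≥ 3` and `n₁ ≥ k₁`, then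
`[n₁, k₁+k₂, k₂] + [n₂, k₂, k₂] ≤ [n₁+n₂, k₁+k₂, k₂]`. -/
theorem stmt4 (k₁ k₂ n₁ n₂ : ℕ) (hk₂ : 3 ≤ k₂) (hk : k₂ ≤ k₁) (hn₁ : k₁ ≤ n₁) :
    bracket n₁ (k₁ + k₂) k₂ + bracket n₂ k₂ k₂ ≤ bracket (n₁ + n₂) (k₁ + k₂) k₂ := by
  have hL : 0 < k₂ - 1 := by omega
  rw [bracket_self]
  rcases le_or_gt (n₁ + n₂) (k₁ + k₂ - 1) with h | h
  · rw [bracket_of_le (by omega), bracket_of_le h, blockChoose_of_le (by omega)]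
    exact choose_two_add_choose_two_le n₁ n₂
  rw [bracket_of_lt h]
  rcases le_or_gt n₁ (k₁ + k₂ - 1) with h₁ | h₁
  · obtain ⟨d, hd⟩ : ∃ d, k₁ + k₂ - 1 = n₁ + d := ⟨_, (Nat.add_sub_cancel' h₁).symm⟩
    obtain ⟨y, rfl⟩ : ∃ y, n₂ = y + d := ⟨n₂ - d, by omega⟩
    rw [bracket_of_le h₁, hd, show n₁ + (y + d) - (n₁ + d) = y by omega]
    exact choose_two_add_blockChoose_le hL (by omega)
  · rw [bracket_of_lt h₁, show n₁ + n₂ - (k₁ + k₂ - 1) = n₁ - (k₁ + k₂ - 1) + n₂ by omega]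
    have := blockChoose_add_blockChoose_le hL (n₁ - (k₁ + k₂ - 1)) n₂
    omega
end

section
/- Let k₁ ≥ k₂ ≥ 3 be integers, let s = ⌊k₁/2⌋ + ⌊k₂/2⌋, and let n₁, n₂ be nonnegative integers with n₁ ≥ k₁ + k₂ and n₂ ≥ 1. Then [n₁, s] + [n₂, k₂, k₂] < [n₁+n₂, s]. -/
/-- The quantity `[n, s]` of the paper, for `n ≥ s`:
`[n,s] = C(s-1,2) + (s-1)(n-s+1)`. -/
def bracket2 (n s : ℕ) : ℕ := (s - 1).choose 2 + (s - 1) * (n - s + 1)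

/-!
For `n ≥ s` the quantity `[n, s]` grows by exactly `s - 1` per unit of `n`, so the claim says
`[n₂, k₂, k₂] < (s - 1) n₂`. Now `[n, m, ℓ]` counts the pairs inside the blocks of a partition of
`n` points into blocks of size at most `m - 1`, so each point lies in at most `m - 2` pairs and
`2 [n, m, ℓ] ≤ n (m - 2)`; finally `k₂ - 2 ≤ s - 1`.
-/

theorem two_mul_choose_two_le_mul {n m : ℕ} (h : n ≤ m + 1) : 2 * n.choose 2 ≤ n * m :=
  calc 2 * n.choose 2 ≤ n * (n - 1) := by rw [Nat.choose_two_right]; exact Nat.mul_div_le _ 2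
    _ ≤ n * m := Nat.mul_le_mul_left n (by omega)

theorem two_mul_bracket_le {n m ℓ : ℕ} (hℓ : 2 ≤ ℓ) (hℓm : ℓ ≤ m) :
    2 * bracket n m ℓ ≤ n * (m - 2) := by
  unfold bracket
  split_ifs with hn
  · exact two_mul_choose_two_le_mul (by omega)
  · have hdivmod := Nat.div_add_mod' (n - (m - 1)) (ℓ - 1)
    have hr := Nat.mod_lt (n - (m - 1)) (by omega : 0 < ℓ - 1)
    set t := (n - (m - 1)) / (ℓ - 1)
    set r := (n - (m - 1)) % (ℓ - 1)
    have hdecomp : n = (m - 1) + t * (ℓ - 1) + r := by omega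
    have hm : 2 * (m - 1).choose 2 ≤ (m - 1) * (m - 2) := two_mul_choose_two_le_mul (by omega)
    have hℓ' : 2 * (ℓ - 1).choose 2 ≤ (ℓ - 1) * (m - 2) := two_mul_choose_two_le_mul (by omega)
    have hr' : 2 * r.choose 2 ≤ r * (m - 2) := two_mul_choose_two_le_mul (by omega)
    calc 2 * ((m - 1).choose 2 + t * (ℓ - 1).choose 2 + r.choose 2)
        = 2 * (m - 1).choose 2 + t * (2 * (ℓ - 1).choose 2) + 2 * r.choose 2 := by ring
      _ ≤ (m - 1) * (m - 2) + t * ((ℓ - 1) * (m - 2)) + r * (m - 2) := by gcongr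
      _ = n * (m - 2) := by rw [hdecomp]; ring

theorem bracket_lt_mul {n m ℓ : ℕ} (hn : 0 < n) (hℓ : 3 ≤ ℓ) (hℓm : ℓ ≤ m) :
    bracket n m ℓ < n * (m - 2) := by
  have hpos : 0 < n * (m - 2) := Nat.mul_pos hn (by omega)
  have := two_mul_bracket_le (n := n) (by omega : 2 ≤ ℓ) hℓm
  omega

theorem bracket2_add {n s : ℕ} (hs : s ≤ n) (m : ℕ) :
    bracket2 (n + m) s = bracket2 n s + (s - 1) * m := by
  unfold bracket2
  rw [show n + m - s + 1 = (n - s + 1) + m by omega]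
  ring

/-- If `k₁ ≥ k₂ ≥ 3`, `s = ⌊k₁/2⌋ + ⌊k₂/2⌋`, `n₁ ≥ k₁ + k₂` and `n₂ ≥ 1`, then
`[n₁, s] + [n₂, k₂, k₂] < [n₁+n₂, s]`. -/
theorem stmt5 (k₁ k₂ n₁ n₂ : ℕ) (hk₂ : 3 ≤ k₂) (hk : k₂ ≤ k₁)
    (hn₁ : k₁ + k₂ ≤ n₁) (hn₂ : 1 ≤ n₂) :
    bracket2 n₁ (k₁ / 2 + k₂ / 2) + bracket n₂ k₂ k₂ < bracket2 (n₁ + n₂) (k₁ / 2 + k₂ / 2) := by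
  set s := k₁ / 2 + k₂ / 2 with hs
  rw [bracket2_add (by omega : s ≤ n₁), Nat.mul_comm (s - 1)]
  calc bracket2 n₁ s + bracket n₂ k₂ k₂ < bracket2 n₁ s + n₂ * (k₂ - 2) := by
        gcongr; exact bracket_lt_mul hn₂ hk₂ le_rfl
    _ ≤ bracket2 n₁ s + n₂ * (s - 1) := by gcongr bracket2 n₁ s + n₂ * ?_; omega
end

section
/- Let G be a 2P₇-free graph and let x₁x₂…x₁₃ be a path in G on 13 distinct vertices. Then every vertex y of G outside {x₁,…,x₁₃} is non-adjacent to each of x₁, x₆, x₈, x₁₃, and for each p ∈ {2,3,4}, y is not adjacent to both x_p and x_{p+8}. -/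
open SimpleGraph

/-- `H` is contained in `G` as a subgraph, i.e. there is an injective graph
homomorphism from `H` to `G` (a copy of `H` in `G`). -/
def Contains {α β : Type*} (H : SimpleGraph α) (G : SimpleGraph β) : Prop :=
  ∃ f : H →g G, Function.Injective f

/-- `2P₇`: the disjoint union of two copies of the path on 7 vertices. -/
def TwoP7 : SimpleGraph (Fin 7 ⊕ Fin 7) :=
  SimpleGraph.pathGraph 7 ⊕g SimpleGraph.pathGraph 7

/-!
Together with `y`, the path gives 14 vertices, and in each case they split into two
vertex-disjoint paths on 7 vertices. In the paper's indexing: `y x₁ ⋯ x₆ | x₇ ⋯ x₁₃` if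
`y ∼ x₁`; `x₁ ⋯ x₆ y | x₇ ⋯ x₁₃` if `y ∼ x₆`; mirror images of these for `x₁₃` and `x₈`; and
`x₁ ⋯ x_p y x_{p+8} ⋯ x₁₃ | x_{p+1} ⋯ x_{p+7}` if `y ∼ x_p, x_{p+8}`.
-/

theorem Contains.trans {α β γ : Type*} {H : SimpleGraph α} {G : SimpleGraph β}
    {K : SimpleGraph γ} (hHG : Contains H G) (hGK : Contains G K) : Contains H K := by
  obtain ⟨f, hf⟩ := hHG
  obtain ⟨g, hg⟩ := hGK
  exact ⟨g.comp f, hg.comp hf⟩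

theorem adj_of_pathGraph_adj {V : Type*} {G : SimpleGraph V} {n : ℕ} {a : Fin (n + 1) → V}
    (ha : ∀ i : Fin n, G.Adj (a i.castSucc) (a i.succ)) {i j : Fin (n + 1)}
    (hij : (pathGraph (n + 1)).Adj i j) : G.Adj (a i) (a j) := by
  wlog h : i.val + 1 = j.val generalizing i j
  · exact (this hij.symm ((pathGraph_adj.mp hij).resolve_left h)).symm
  have hi : i.val < n := by omega
  convert ha ⟨i.val, hi⟩ using 2 <;> ext <;> simp [h]

theorem contains_twoP7_of_paths {W : Type*} {H : SimpleGraph W} (a b : Fin 7 → W)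
    (hab : Function.Injective (Sum.elim a b))
    (ha : ∀ i : Fin 6, H.Adj (a i.castSucc) (a i.succ))
    (hb : ∀ i : Fin 6, H.Adj (b i.castSucc) (b i.succ)) : Contains TwoP7 H := by
  refine ⟨⟨Sum.elim a b, ?_⟩, hab⟩
  rintro (i | i) (j | j) hij <;> simp only [TwoP7, sum_adj_inl, sum_adj_inr] at hij
  · exact adj_of_pathGraph_adj ha hij
  · exact (not_adj_sum_inl_inr _ _ hij).elim
  · exact (not_adj_sum_inl_inr _ _ hij.symm).elim
  · exact adj_of_pathGraph_adj hb hij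

/-- The configuration of the path `x` and an outside vertex `y` adjacent to `x k` for `k ∈ S`:
vertex `0` plays `y` and `k.succ` plays `x k`. -/
def pathWithApex (S : Finset (Fin 13)) : SimpleGraph (Fin 14) :=
  fromRel fun i j => (i ≠ 0 ∧ i.val + 1 = j.val) ∨ (i = 0 ∧ ∃ k ∈ S, j = k.succ)

instance (S : Finset (Fin 13)) : DecidableRel (pathWithApex S).Adj :=
  fun _ _ => decidable_of_iff' _ (fromRel_adj ..)

theorem contains_pathWithApex {V : Type*} {G : SimpleGraph V} {x : Fin 13 → V}
    (hinj : Function.Injective x) (hpath : ∀ i : Fin 12, G.Adj (x i.castSucc) (x i.succ))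
    {y : V} (hy : y ∉ Set.range x) {S : Finset (Fin 13)} (hS : ∀ k ∈ S, G.Adj y (x k)) :
    Contains (pathWithApex S) G := by
  suffices hrel : ∀ i j : Fin 14, (i ≠ 0 ∧ i.val + 1 = j.val) ∨ (i = 0 ∧ ∃ k ∈ S, j = k.succ) →
      G.Adj ((Fin.cons y x : Fin 14 → V) i) ((Fin.cons y x : Fin 14 → V) j) by
    refine ⟨⟨Fin.cons y x, fun {i j} hij => ?_⟩, Fin.cons_injective_iff.mpr ⟨hy, hinj⟩⟩
    obtain ⟨-, hij | hji⟩ := (fromRel_adj _ i j).mp hij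
    exacts [hrel i j hij, (hrel j i hji).symm]
  rintro i j (⟨hi, hij⟩ | ⟨rfl, k, hk, rfl⟩)
  · obtain ⟨i, rfl⟩ := Fin.exists_succ_eq.mpr hi
    obtain ⟨j, rfl⟩ := Fin.exists_succ_eq.mpr (show j ≠ 0 by rintro rfl; simp at hij)
    simp only [Fin.cons_succ]
    exact adj_of_pathGraph_adj hpath (pathGraph_adj.mpr (Or.inl (by simpa using hij)))
  · simpa using hS k hk

theorem contains_twoP7_pathWithApex_singleton {k : Fin 13}
    (hk : k ∈ ({0, 5, 7, 12} : Finset (Fin 13))) : Contains TwoP7 (pathWithApex {k}) := by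
  simp only [Finset.mem_insert, Finset.mem_singleton] at hk
  rcases hk with rfl | rfl | rfl | rfl
  · exact contains_twoP7_of_paths ![0, 1, 2, 3, 4, 5, 6] ![7, 8, 9, 10, 11, 12, 13]
      (by decide) (by decide) (by decide)
  · exact contains_twoP7_of_paths ![1, 2, 3, 4, 5, 6, 0] ![7, 8, 9, 10, 11, 12, 13]
      (by decide) (by decide) (by decide)
  · exact contains_twoP7_of_paths ![1, 2, 3, 4, 5, 6, 7] ![0, 8, 9, 10, 11, 12, 13]
      (by decide) (by decide) (by decide)
  · exact contains_twoP7_of_paths ![1, 2, 3, 4, 5, 6, 7] ![8, 9, 10, 11, 12, 13, 0]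
      (by decide) (by decide) (by decide)

theorem contains_twoP7_pathWithApex_pair {p : Fin 13}
    (hp : p ∈ ({1, 2, 3} : Finset (Fin 13))) : Contains TwoP7 (pathWithApex {p, p + 8}) := by
  simp only [Finset.mem_insert, Finset.mem_singleton] at hp
  rcases hp with rfl | rfl | rfl
  · exact contains_twoP7_of_paths ![1, 2, 0, 10, 11, 12, 13] ![3, 4, 5, 6, 7, 8, 9]
      (by decide) (by decide) (by decide)
  · exact contains_twoP7_of_paths ![1, 2, 3, 0, 11, 12, 13] ![4, 5, 6, 7, 8, 9, 10]
      (by decide) (by decide) (by decide)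
  · exact contains_twoP7_of_paths ![1, 2, 3, 4, 0, 12, 13] ![5, 6, 7, 8, 9, 10, 11]
      (by decide) (by decide) (by decide)

/-- Indices are shifted by one: `x i` here is `x_{i+1}` of the paper. -/
theorem stmt7 {V : Type*} (G : SimpleGraph V) (hfree : ¬ Contains TwoP7 G)
    (x : Fin 13 → V) (hinj : Function.Injective x)
    (hpath : ∀ i : Fin 12, G.Adj (x i.castSucc) (x i.succ)) :
    ∀ y, y ∉ Set.range x →
      (¬ G.Adj y (x 0) ∧ ¬ G.Adj y (x 5) ∧ ¬ G.Adj y (x 7) ∧ ¬ G.Adj y (x 12)) ∧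
      (¬ (G.Adj y (x 1) ∧ G.Adj y (x 9)) ∧ ¬ (G.Adj y (x 2) ∧ G.Adj y (x 10)) ∧
        ¬ (G.Adj y (x 3) ∧ G.Adj y (x 11))) := by
  intro y hy
  have not_adj_all {S : Finset (Fin 13)} (hS : Contains TwoP7 (pathWithApex S)) :
      ¬ ∀ k ∈ S, G.Adj y (x k) :=
    fun hadj => hfree (hS.trans (contains_pathWithApex hinj hpath hy hadj))
  have not_adj {k : Fin 13} (hk : k ∈ ({0, 5, 7, 12} : Finset (Fin 13))) : ¬ G.Adj y (x k) :=
    fun h => not_adj_all (contains_twoP7_pathWithApex_singleton hk) (by simpa using h)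
  have not_adj_pair {p : Fin 13} (hp : p ∈ ({1, 2, 3} : Finset (Fin 13))) :
      ¬ (G.Adj y (x p) ∧ G.Adj y (x (p + 8))) :=
    fun h => not_adj_all (contains_twoP7_pathWithApex_pair hp) (by simpa using h)
  exact ⟨⟨not_adj (by decide), not_adj (by decide), not_adj (by decide), not_adj (by decide)⟩,
    not_adj_pair (by decide), not_adj_pair (by decide), not_adj_pair (by decide)⟩
end

section
/- Let G be a 2P₇-free graph and let x₁x₂…x₁₃ be a path in G on 13 distinct vertices. If there exist distinct vertices y₁, y₂, y₃ outside {x₁,…,x₁₃} with y₁ adjacent to y₂, y₂ adjacent to y₃, and y₁ adjacent to some vertex of the path, then the number of edges of G with both endpoints in {x₁,…,x₁₃} is at most 57. -/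
/-!
Indices start at `0`, so the middle vertex of the path is `x 6`. Let `y₃y₂y₁` hang off `x i`.
If `i ≠ 6`, then `y₃y₂y₁` followed by four consecutive vertices of the half of the path containing
`x i`, starting at `x i`, is a `P₇` disjoint from the other half, which is a second `P₇`.
So `i = 6`. Each of the hooks `y₃y₂y₁x₆x₅x₄x₃` and `y₃y₂y₁x₆x₇x₈x₉` leaves two segments of the path,
and a chord joining them into a `P₇` would give a `2P₇`. This excludes 25 of the 78 pairs of path
vertices, leaving at most 53 edges.
-/

open SimpleGraph

open Finset

theorem contains_iff_isContained {α β : Type*} {H : SimpleGraph α} {G : SimpleGraph β} :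
    Contains H G ↔ H ⊑ G :=
  ⟨fun ⟨f, hf⟩ ↦ ⟨⟨f, hf⟩⟩, fun ⟨f⟩ ↦ ⟨f.toHom, f.injective⟩⟩

namespace SimpleGraph

variable {V α β : Type*} {G : SimpleGraph V}

def Hom.sumElim {A : SimpleGraph α} {B : SimpleGraph β} (f : A →g G) (g : B →g G) :
    A ⊕g B →g G where
  toFun := Sum.elim f g
  map_rel' {u v} h := by
    cases u <;> cases v <;> simp_all [f.map_rel, g.map_rel]

def Hom.pathGraphOfAdj {n : ℕ} (p : Fin (n + 1) → V)
    (hp : ∀ k : Fin n, G.Adj (p k.castSucc) (p k.succ)) : pathGraph (n + 1) →g G where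
  toFun := p
  map_rel' {u v} h := by
    have key : ∀ u v : Fin (n + 1), u.val + 1 = v.val → G.Adj (p u) (p v) := by
      intro u v huv
      convert hp ⟨u, by omega⟩ using 2 <;> ext <;> simp [huv]
    rcases pathGraph_adj.mp h with h | h
    · exact key u v h
    · exact (key v u h).symm

def IsDisjointPathPair {m n : ℕ} (G : SimpleGraph V) (p : Fin (m + 1) → V) (q : Fin (n + 1) → V) :
    Prop :=
  (∀ k : Fin m, G.Adj (p k.castSucc) (p k.succ)) ∧ (∀ k : Fin n, G.Adj (q k.castSucc) (q k.succ)) ∧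
    Function.Injective (Sum.elim p q)

instance {m n : ℕ} [DecidableEq V] [DecidableRel G.Adj] (p : Fin (m + 1) → V)
    (q : Fin (n + 1) → V) : Decidable (IsDisjointPathPair G p q) :=
  inferInstanceAs (Decidable (_ ∧ _ ∧ _))

theorem sum_pathGraph_isContained {m n : ℕ} (p : Fin (m + 1) → V) (q : Fin (n + 1) → V)
    (h : IsDisjointPathPair G p q := by decide) : pathGraph (m + 1) ⊕g pathGraph (n + 1) ⊑ G :=
  ⟨⟨(Hom.pathGraphOfAdj p h.1).sumElim (Hom.pathGraphOfAdj q h.2.1), h.2.2⟩⟩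

/-- Vertices `0, …, m - 1` form a path and so do `m, …, m + n - 1`; the two are joined by the edge
between `m` and `i`, and `chords` lists further edges among the first `m` vertices. -/
def hookGraph (m n : ℕ) (i : Fin m) (chords : List (Fin m × Fin m)) : SimpleGraph (Fin (m + n)) :=
  fromRel fun u v ↦ (u.val + 1 = v.val ∧ v.val ≠ m) ∨ (u.val = m ∧ v = Fin.castAdd n i) ∨
    ∃ c ∈ chords, u = Fin.castAdd n c.1 ∧ v = Fin.castAdd n c.2

instance (m n : ℕ) (i : Fin m) (chords : List (Fin m × Fin m)) :
    DecidableRel (hookGraph m n i chords).Adj :=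
  inferInstanceAs (DecidableRel (fromRel _).Adj)

theorem hookGraph_isContained {m n : ℕ} (X : Copy (pathGraph m) G) (Y : Copy (pathGraph (n + 1)) G)
    (hXY : ∀ u v, X u ≠ Y v) {i : Fin m} (hi : G.Adj (Y 0) (X i))
    {chords : List (Fin m × Fin m)} (hchords : ∀ c ∈ chords, G.Adj (X c.1) (X c.2)) :
    hookGraph m (n + 1) i chords ⊑ G := by
  refine ⟨⟨⟨Fin.append X Y, fun {u v} huv ↦ ?_⟩,
    Fin.append_injective_iff.2 ⟨X.injective, Y.injective, hXY⟩⟩⟩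
  have hXadj := fun {a b : Fin m} (h : a.val + 1 = b.val) ↦
    X.toHom.map_adj (pathGraph_adj.2 (.inl h))
  have hYadj := fun {a b : Fin (n + 1)} (h : a.val + 1 = b.val) ↦
    Y.toHom.map_adj (pathGraph_adj.2 (.inl h))
  -- Each case is an edge of `X` or `Y`, the edge `Y 0 — X i`, a chord, or contradicts the
  -- index ranges.
  induction u using Fin.addCases with | left a => ?_ | right a => ?_ <;>
  induction v using Fin.addCases with | left b => ?_ | right b => ?_ <;>
  simp only [hookGraph, fromRel_adj, Fin.append_left, Fin.append_right, Fin.ext_iff,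
    Fin.val_castAdd, Fin.val_natAdd] at huv ⊢ <;>
  obtain ⟨-, (⟨h, h'⟩ | ⟨h, h'⟩ | ⟨c, hc, h₁, h₂⟩) | (⟨h, h'⟩ | ⟨h, h'⟩ | ⟨c, hc, h₁, h₂⟩)⟩ := huv
  all_goals first
    | exact hXadj h | exact (hXadj h).symm | exact hYadj (by omega) | exact (hYadj (by omega)).symm
    | (rw [Fin.ext h₁, Fin.ext h₂]; exact hchords c hc)
    | (rw [Fin.ext h₁, Fin.ext h₂]; exact (hchords c hc).symm)
    | omega
    | (rw [Fin.ext h', show b = 0 by ext; rw [Fin.val_zero]; omega]; exact hi.symm)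
    | (rw [Fin.ext h', show a = 0 by ext; rw [Fin.val_zero]; omega]; exact hi)

theorem twoP7_isContained_hookGraph_of_ne {i : Fin 13} (hi : i ≠ 6) :
    TwoP7 ⊑ hookGraph 13 3 i [] := by
  fin_cases i
  · exact sum_pathGraph_isContained ![15, 14, 13, 0, 1, 2, 3] ![6, 7, 8, 9, 10, 11, 12]
  · exact sum_pathGraph_isContained ![15, 14, 13, 1, 2, 3, 4] ![6, 7, 8, 9, 10, 11, 12]
  · exact sum_pathGraph_isContained ![15, 14, 13, 2, 3, 4, 5] ![6, 7, 8, 9, 10, 11, 12]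
  · exact sum_pathGraph_isContained ![15, 14, 13, 3, 2, 1, 0] ![6, 7, 8, 9, 10, 11, 12]
  · exact sum_pathGraph_isContained ![15, 14, 13, 4, 3, 2, 1] ![6, 7, 8, 9, 10, 11, 12]
  · exact sum_pathGraph_isContained ![15, 14, 13, 5, 4, 3, 2] ![6, 7, 8, 9, 10, 11, 12]
  · exact absurd rfl hi
  · exact sum_pathGraph_isContained ![15, 14, 13, 7, 8, 9, 10] ![0, 1, 2, 3, 4, 5, 6]
  · exact sum_pathGraph_isContained ![15, 14, 13, 8, 9, 10, 11] ![0, 1, 2, 3, 4, 5, 6]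
  · exact sum_pathGraph_isContained ![15, 14, 13, 9, 10, 11, 12] ![0, 1, 2, 3, 4, 5, 6]
  · exact sum_pathGraph_isContained ![15, 14, 13, 10, 9, 8, 7] ![0, 1, 2, 3, 4, 5, 6]
  · exact sum_pathGraph_isContained ![15, 14, 13, 11, 10, 9, 8] ![0, 1, 2, 3, 4, 5, 6]
  · exact sum_pathGraph_isContained ![15, 14, 13, 12, 11, 10, 9] ![0, 1, 2, 3, 4, 5, 6]

/-- Each pair, used as a chord, joins the two segments of the path left over by the hook
`y₃y₂y₁x₆x₅x₄x₃` or `y₃y₂y₁x₆x₇x₈x₉` into a path on seven vertices. -/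
def blockedChords : List (Fin 13 × Fin 13) :=
  [(0, 7), (0, 8), (0, 9), (0, 10), (0, 11), (0, 12), (1, 7),
   (1, 8), (1, 10), (1, 11), (1, 12), (2, 7), (2, 8), (2, 9),
   (2, 10), (2, 11), (2, 12), (3, 10), (3, 12), (4, 10), (4, 11),
   (4, 12), (5, 10), (5, 11), (5, 12)]

theorem twoP7_isContained_hookGraph_of_mem_blockedChords {c : Fin 13 × Fin 13}
    (hc : c ∈ blockedChords) : TwoP7 ⊑ hookGraph 13 3 6 [c] := by
  fin_cases hc
  · exact sum_pathGraph_isContained ![15, 14, 13, 6, 5, 4, 3] ![0, 7, 8, 9, 10, 11, 12]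
  · exact sum_pathGraph_isContained ![15, 14, 13, 6, 5, 4, 3] ![1, 0, 8, 9, 10, 11, 12]
  · exact sum_pathGraph_isContained ![15, 14, 13, 6, 5, 4, 3] ![2, 1, 0, 9, 10, 11, 12]
  · exact sum_pathGraph_isContained ![15, 14, 13, 6, 5, 4, 3] ![2, 1, 0, 10, 9, 8, 7]
  · exact sum_pathGraph_isContained ![15, 14, 13, 6, 5, 4, 3] ![1, 0, 11, 10, 9, 8, 7]
  · exact sum_pathGraph_isContained ![15, 14, 13, 6, 5, 4, 3] ![0, 12, 11, 10, 9, 8, 7]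
  · exact sum_pathGraph_isContained ![15, 14, 13, 6, 5, 4, 3] ![0, 1, 7, 8, 9, 10, 11]
  · exact sum_pathGraph_isContained ![15, 14, 13, 6, 5, 4, 3] ![0, 1, 8, 9, 10, 11, 12]
  · exact sum_pathGraph_isContained ![15, 14, 13, 6, 7, 8, 9] ![4, 3, 2, 1, 10, 11, 12]
  · exact sum_pathGraph_isContained ![15, 14, 13, 6, 5, 4, 3] ![0, 1, 11, 10, 9, 8, 7]
  · exact sum_pathGraph_isContained ![15, 14, 13, 6, 5, 4, 3] ![0, 1, 12, 11, 10, 9, 8]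
  · exact sum_pathGraph_isContained ![15, 14, 13, 6, 5, 4, 3] ![0, 1, 2, 7, 8, 9, 10]
  · exact sum_pathGraph_isContained ![15, 14, 13, 6, 5, 4, 3] ![0, 1, 2, 8, 9, 10, 11]
  · exact sum_pathGraph_isContained ![15, 14, 13, 6, 5, 4, 3] ![0, 1, 2, 9, 10, 11, 12]
  · exact sum_pathGraph_isContained ![15, 14, 13, 6, 5, 4, 3] ![0, 1, 2, 10, 9, 8, 7]
  · exact sum_pathGraph_isContained ![15, 14, 13, 6, 5, 4, 3] ![0, 1, 2, 11, 10, 9, 8]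
  · exact sum_pathGraph_isContained ![15, 14, 13, 6, 5, 4, 3] ![0, 1, 2, 12, 11, 10, 9]
  · exact sum_pathGraph_isContained ![15, 14, 13, 6, 7, 8, 9] ![0, 1, 2, 3, 10, 11, 12]
  · exact sum_pathGraph_isContained ![15, 14, 13, 6, 7, 8, 9] ![0, 1, 2, 3, 12, 11, 10]
  · exact sum_pathGraph_isContained ![15, 14, 13, 6, 7, 8, 9] ![0, 1, 2, 3, 4, 10, 11]
  · exact sum_pathGraph_isContained ![15, 14, 13, 6, 7, 8, 9] ![0, 1, 2, 3, 4, 11, 10]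
  · exact sum_pathGraph_isContained ![15, 14, 13, 6, 7, 8, 9] ![0, 1, 2, 3, 4, 12, 11]
  · exact sum_pathGraph_isContained ![15, 14, 13, 6, 7, 8, 9] ![0, 1, 2, 3, 4, 5, 10]
  · exact sum_pathGraph_isContained ![15, 14, 13, 6, 7, 8, 9] ![0, 1, 2, 3, 4, 5, 11]
  · exact sum_pathGraph_isContained ![15, 14, 13, 6, 7, 8, 9] ![0, 1, 2, 3, 4, 5, 12]

theorem ncard_edges_on_range_le [DecidableRel G.Adj] {ι : Type*} [Fintype ι] [LinearOrder ι]
    (x : ι → V) : {e : Sym2 V | e ∈ G.edgeSet ∧ ∀ v ∈ e, v ∈ Set.range x}.ncard ≤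
      #{p : ι × ι | p.1 < p.2 ∧ G.Adj (x p.1) (x p.2)} := by
  let S : Finset (ι × ι) := {p | p.1 < p.2 ∧ G.Adj (x p.1) (x p.2)}
  have hsub : {e : Sym2 V | e ∈ G.edgeSet ∧ ∀ v ∈ e, v ∈ Set.range x} ⊆
      (fun p : ι × ι ↦ s(x p.1, x p.2)) '' (S : Set (ι × ι)) := by
    rintro e ⟨he, hrange⟩
    induction e using Sym2.ind with | _ u v => ?_
    obtain ⟨a, rfl⟩ := hrange u (Sym2.mem_mk_left u v)
    obtain ⟨b, rfl⟩ := hrange v (Sym2.mem_mk_right _ v)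
    rw [mem_edgeSet] at he
    rcases lt_or_gt_of_ne (fun hab : a = b ↦ he.ne (congrArg x hab)) with hab | hab
    · exact ⟨(a, b), by simp [S, hab, he], rfl⟩
    · exact ⟨(b, a), by simp [S, hab, he.symm], Sym2.eq_swap⟩
  calc _ ≤ _ := Set.ncard_le_ncard hsub (Set.toFinite _)
    _ ≤ _ := Set.ncard_image_le (Finset.finite_toSet _)
    _ = #S := Set.ncard_coe_finset S

end SimpleGraph

theorem stmt11_general {V : Type*} (G : SimpleGraph V) (hfree : ¬ Contains TwoP7 G)
    (x : Fin 13 → V) (hinj : Function.Injective x)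
    (hpath : ∀ i : Fin 12, G.Adj (x i.castSucc) (x i.succ))
    (hP3 : ∃ y₁ y₂ y₃, y₁ ≠ y₂ ∧ y₁ ≠ y₃ ∧ y₂ ≠ y₃ ∧
      y₁ ∉ Set.range x ∧ y₂ ∉ Set.range x ∧ y₃ ∉ Set.range x ∧
      G.Adj y₁ y₂ ∧ G.Adj y₂ y₃ ∧ ∃ i : Fin 13, G.Adj y₁ (x i)) :
    ({e : Sym2 V | e ∈ G.edgeSet ∧ ∀ v ∈ e, v ∈ Set.range x}).ncard ≤ 57 := by
  classical
  obtain ⟨y₁, y₂, y₃, h₁₂, h₁₃, h₂₃, hy₁, hy₂, hy₃, hadj₁₂, hadj₂₃, i, hi⟩ := hP3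
  let X : Copy (pathGraph 13) G := ⟨Hom.pathGraphOfAdj x hpath, hinj⟩
  have hY : Function.Injective ![y₁, y₂, y₃] := by
    intro a b h; fin_cases a <;> fin_cases b <;> simp_all
  let Y : Copy (pathGraph 3) G :=
    ⟨Hom.pathGraphOfAdj ![y₁, y₂, y₃] (by simp [Fin.forall_fin_succ, hadj₁₂, hadj₂₃]), hY⟩
  have hXY : ∀ u v, X u ≠ Y v := by
    intro u v h
    fin_cases v
    exacts [hy₁ ⟨u, h⟩, hy₂ ⟨u, h⟩, hy₃ ⟨u, h⟩]
  have hforbid : ∀ chords, (∀ c ∈ chords, G.Adj (x c.1) (x c.2)) →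
      ¬ TwoP7 ⊑ hookGraph 13 3 i chords := fun _ hchords h ↦
    hfree (contains_iff_isContained.2 (h.trans (hookGraph_isContained X Y hXY hi hchords)))
  obtain rfl : i = 6 := by_contra fun h ↦ hforbid [] (by simp) (twoP7_isContained_hookGraph_of_ne h)
  have hblocked : ∀ c ∈ blockedChords, ¬ G.Adj (x c.1) (x c.2) := fun c hc h ↦
    hforbid [c] (by simpa using h) (twoP7_isContained_hookGraph_of_mem_blockedChords hc)
  calc _ ≤ #{p : Fin 13 × Fin 13 | p.1 < p.2 ∧ G.Adj (x p.1) (x p.2)} := ncard_edges_on_range_le x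
    _ ≤ #{p : Fin 13 × Fin 13 | p.1 < p.2 ∧ p ∉ blockedChords} := card_le_card <|
      monotone_filter_right _ fun p _ ⟨hlt, hadj⟩ ↦ ⟨hlt, fun hp ↦ hblocked p hp hadj⟩
    _ = 53 := by decide
    _ ≤ 57 := by norm_num

/-- Fact 2: if there is a path `y₁y₂y₃` outside the 13-vertex path with `y₁` hitting the path, then there are at most 57 edges with both endpoints on the path. -/
theorem stmt11 {V : Type*} [Fintype V] (G : SimpleGraph V) (hfree : ¬ Contains TwoP7 G)
    (x : Fin 13 → V) (hinj : Function.Injective x)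
    (hpath : ∀ i : Fin 12, G.Adj (x i.castSucc) (x i.succ))
    (hP3 : ∃ y₁ y₂ y₃, y₁ ≠ y₂ ∧ y₁ ≠ y₃ ∧ y₂ ≠ y₃ ∧
      y₁ ∉ Set.range x ∧ y₂ ∉ Set.range x ∧ y₃ ∉ Set.range x ∧
      G.Adj y₁ y₂ ∧ G.Adj y₂ y₃ ∧ ∃ i : Fin 13, G.Adj y₁ (x i)) :
    ({e : Sym2 V | e ∈ G.edgeSet ∧ ∀ v ∈ e, v ∈ Set.range x}).ncard ≤ 57 :=
  stmt11_general G hfree x hinj hpath hP3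
end
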